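/- Let w be a word of length n over a linearly ordered alphabet and k ≥ 3. If s = w[i_1] w[i_2] ... w[i_m] is a plateau-k-rollercoaster subsequence of w of maximum length m, then i_m is the last occurrence in w of the letter w[i_m]; that is, for every index j with i_m < j ≤ n, w[j] ≠ w[i_m]. -/

import Mathlib

namespace RollerCoaster

abbrev Word := List ℕ

def weakIncr (u : Word) : Prop := u.Chain' (· ≤ ·)

def weakDecr (u : Word) : Prop := u.Chain' (· ≥ ·)

def plateauRun (u : Word) : Prop := weakIncr u ∨ weakDecr u

/-- The factor `w[i..j]` (0-indexed, inclusive). -/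
def factorAt (w : Word) (i j : ℕ) : Word := (w.drop i).take (j + 1 - i)

/-- `w[i..j]` is a maximal plateau-run: weakly monotone and not extendable
to a weakly monotone factor in either direction. -/
def maxRunAt (w : Word) (i j : ℕ) : Prop :=
  i ≤ j ∧ j < w.length ∧ plateauRun (factorAt w i j) ∧
  (i = 0 ∨ ¬ plateauRun (factorAt w (i - 1) j)) ∧
  (j + 1 = w.length ∨ ¬ plateauRun (factorAt w i (j + 1)))

/-- Number of distinct letters of a word. -/
def distinctCount (u : Word) : ℕ := u.dedup.length

/-- `w` is a plateau-`k`-rollercoaster: every maximal plateau-run contains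
at least `k` distinct letters. -/
def IsPlateauRC (k : ℕ) (w : Word) : Prop :=
  ∀ i j, maxRunAt w i j → k ≤ distinctCount (factorAt w i j)

def subseqAt (w : Word) (idx : List ℕ) : Word := idx.map (fun t => w.getD t 0)

def embeds (w : Word) (idx : List ℕ) : Prop :=
  idx.Pairwise (· < ·) ∧ ∀ t ∈ idx, t < w.length

/-- `w` is a plateau-`(k,h)_ξ`-rollercoaster (`ξ = ↑` iff `up = true`):
the last (possibly incomplete) run has orientation `ξ` and exactly `h`
distinct letters if `h < k` (at least `k` if `h = k`), and every other
maximal run is a plateau-`k`-run. -/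
def IsPRCkh (k h : ℕ) (up : Bool) (w : Word) : Prop :=
  w ≠ [] ∧
  ∃ i, i < w.length ∧
    (if up then
        weakIncr (factorAt w i (w.length - 1)) ∧
          (i = 0 ∨ ¬ weakIncr (factorAt w (i - 1) (w.length - 1)))
      else
        weakDecr (factorAt w i (w.length - 1)) ∧
          (i = 0 ∨ ¬ weakDecr (factorAt w (i - 1) (w.length - 1)))) ∧
    (if h < k then distinctCount (factorAt w i (w.length - 1)) = h
      else k ≤ distinctCount (factorAt w i (w.length - 1))) ∧
    ∀ i' j', maxRunAt w i' j' →
      (i' = i ∧ j' = w.length - 1) ∨ k ≤ distinctCount (factorAt w i' j')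

def upEdge (w : Word) (i j : ℕ) : Prop :=
  i < j ∧ j < w.length ∧ w.getD i 0 < w.getD j 0 ∧
  ∀ j', i < j' → j' < j → ¬ (w.getD i 0 ≤ w.getD j' 0 ∧ w.getD j' 0 ≤ w.getD j 0)

def eqEdge (w : Word) (i j : ℕ) : Prop :=
  i < j ∧ j < w.length ∧ w.getD i 0 = w.getD j 0 ∧
  ∀ j', i < j' → j' < j → w.getD j' 0 ≠ w.getD j 0

def downEdge (w : Word) (i j : ℕ) : Prop :=
  i < j ∧ j < w.length ∧ w.getD j 0 < w.getD i 0 ∧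
  ∀ j', i < j' → j' < j → ¬ (w.getD j 0 ≤ w.getD j' 0 ∧ w.getD j' 0 ≤ w.getD i 0)

def negEdge (w : Word) (i j : ℕ) : Prop :=
  upEdge w i j ∨ eqEdge w i j ∨ downEdge w i j

/-!
If a later position `j` carried the letter `w[i_m]`, appending `j` to the embedding would extend
`s` by a copy of its last letter. That copy only lengthens the last maximal run of `s` by a letter
it already contains (a repeated letter fits either orientation of the run, so it cannot start a
new one), and all earlier maximal runs are unchanged; so the longer word is again a
plateau-`k`-rollercoaster, contradicting the maximality of `m`.
-/

lemma factorAt_eq_drop {s : Word} {i j : ℕ} (hj : s.length ≤ j + 1) :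
    factorAt s i j = s.drop i :=
  List.take_of_length_le (by simp only [List.length_drop]; omega)

lemma factorAt_append_singleton_of_lt {s : Word} (a : ℕ) {i j : ℕ} (hj : j < s.length) :
    factorAt (s ++ [a]) i j = factorAt s i j := by
  by_cases hi : i ≤ s.length
  · simp only [factorAt, List.drop_append_of_le_length hi, List.take_append,
      List.length_drop]
    rw [show j + 1 - i - (s.length - i) = 0 by omega, List.take_zero, List.append_nil]
  · simp [factorAt, show j + 1 - i = 0 by omega]

lemma factorAt_append_singleton_length (s : Word) (a : ℕ) {i : ℕ} (hi : i ≤ s.length) :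
    factorAt (s ++ [a]) i s.length = s.drop i ++ [a] := by
  rw [factorAt_eq_drop (by simp), List.drop_append_of_le_length hi]

lemma plateauRun.of_append {u v : Word} (h : plateauRun (u ++ v)) : plateauRun u :=
  h.imp List.IsChain.left_of_append List.IsChain.left_of_append

lemma plateauRun.append_singleton_of_getLast? {u : Word} {a : ℕ} (h : plateauRun u)
    (ha : u.getLast? = some a) : plateauRun (u ++ [a]) := by
  refine h.imp (fun h => h.append (List.isChain_singleton a) ?_)
    (fun h => h.append (List.isChain_singleton a) ?_) <;>
  · simp [ha]

lemma distinctCount_append_singleton_of_mem {u : Word} {a : ℕ} (ha : a ∈ u) :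
    distinctCount (u ++ [a]) = distinctCount u := by
  simp only [distinctCount, ← List.card_toFinset, List.toFinset_append]
  congr 1
  exact Finset.union_eq_left.mpr (by simpa using ha)

lemma maxRunAt_of_maxRunAt_append_singleton {s : Word} {a i j : ℕ}
    (h : maxRunAt (s ++ [a]) i j) (hj : j < s.length) : maxRunAt s i j := by
  obtain ⟨hij, -, hrun, hleft, hright⟩ := h
  rw [factorAt_append_singleton_of_lt a hj] at hrun hleft
  refine ⟨hij, hj, hrun, hleft, ?_⟩
  rcases Nat.lt_or_ge (j + 1) s.length with hj' | hj'
  · rw [factorAt_append_singleton_of_lt a hj'] at hright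
    refine Or.inr (hright.resolve_left ?_)
    simp only [List.length_append, List.length_singleton]
    omega
  · exact Or.inl (by omega)

lemma maxRunAt_of_maxRunAt_append_getLast {s : Word} (hs : s ≠ []) {i : ℕ}
    (h : maxRunAt (s ++ [s.getLast hs]) i s.length) :
    i < s.length ∧ maxRunAt s i (s.length - 1) := by
  have hpos : 0 < s.length := List.length_pos_iff.mpr hs
  have extend : ∀ i' < s.length, plateauRun (s.drop i') →
      plateauRun (factorAt (s ++ [s.getLast hs]) i' s.length) := fun i' hi' hrun => by
    rw [factorAt_append_singleton_length _ _ hi'.le]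
    refine hrun.append_singleton_of_getLast? ?_
    rw [List.getLast?_drop, if_neg (by omega), List.getLast?_eq_some_getLast hs]
  obtain ⟨hij, -, hrun, hleft, -⟩ := h
  have hi : i < s.length := by
    refine lt_of_le_of_ne hij fun hi => ?_
    subst hi
    refine hleft.elim (by omega) fun hnot => hnot (extend _ (by omega) ?_)
    rw [List.drop_length_sub_one hs]
    exact Or.inl (List.isChain_singleton _)
  rw [factorAt_append_singleton_length _ _ hi.le] at hrun
  refine ⟨hi, by omega, by omega, ?_, ?_, Or.inl (by omega)⟩
  · rw [factorAt_eq_drop (by omega)]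
    exact hrun.of_append
  · refine hleft.imp_right fun hnot hrun' => hnot (extend _ (by omega) ?_)
    rwa [factorAt_eq_drop (by omega)] at hrun'

theorem IsPlateauRC.append_getLast {k : ℕ} {s : Word} (hs : s ≠ []) (hrc : IsPlateauRC k s) :
    IsPlateauRC k (s ++ [s.getLast hs]) := by
  intro i j h
  rcases Nat.lt_or_ge j s.length with hj | hj
  · rw [factorAt_append_singleton_of_lt _ hj]
    exact hrc i j (maxRunAt_of_maxRunAt_append_singleton h hj)
  · obtain rfl : j = s.length := by
      have := h.2.1
      simp only [List.length_append, List.length_singleton] at this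
      omega
    obtain ⟨hi, hmax⟩ := maxRunAt_of_maxRunAt_append_getLast hs h
    have hmem : s.getLast hs ∈ s.drop i := List.mem_of_getLast? (by
      rw [List.getLast?_drop, if_neg (by omega), List.getLast?_eq_some_getLast hs])
    rw [factorAt_append_singleton_length _ _ hi.le, distinctCount_append_singleton_of_mem hmem,
      ← factorAt_eq_drop (j := s.length - 1) (by omega)]
    exact hrc i _ hmax

lemma embeds.subseqAt_sublist {w : Word} {idx : List ℕ} (h : embeds w idx) :
    (subseqAt w idx).Sublist w := by
  have key := List.map_getElem_sublist (l := w) (is := idx.pmap Fin.mk h.2)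
    ((List.pairwise_pmap h.2).mpr (h.1.imp fun hlt _ _ => hlt))
  convert key using 1
  rw [List.map_pmap, subseqAt, ← List.pmap_eq_map h.2]
  exact List.pmap_congr_left _ fun t _ ht _ => List.getD_eq_getElem _ _ ht

lemma embeds.append_singleton {w : Word} {idx : List ℕ} (h : embeds w idx) (hne : idx ≠ [])
    {j : ℕ} (hj : idx.getLast hne < j) (hjw : j < w.length) : embeds w (idx ++ [j]) := by
  refine ⟨List.pairwise_append.mpr ⟨h.1, List.pairwise_singleton _ _, ?_⟩, ?_⟩
  · rintro t ht b hb
    rw [List.mem_singleton.mp hb]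
    exact lt_of_le_of_lt ((h.1.imp le_of_lt).rel_getLast ht) hj
  · simpa [or_imp, forall_and] using ⟨h.2, hjw⟩

theorem stmt1_general (w : Word) (k m : ℕ)
    (hmax : ∀ s : Word, s.Sublist w → IsPlateauRC k s → s.length ≤ m)
    (I : List ℕ) (hne : I ≠ []) (hI : embeds w I) (hlen : I.length = m)
    (hrc : IsPlateauRC k (subseqAt w I)) :
    ∀ j, I.getLast hne < j → j < w.length →
      w.getD j 0 ≠ w.getD (I.getLast hne) 0 := by
  intro j hj hjw heq
  have hsne : subseqAt w I ≠ [] := by simpa [subseqAt] using hne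
  have hext : subseqAt w (I ++ [j]) = subseqAt w I ++ [(subseqAt w I).getLast hsne] := by
    simp only [subseqAt, List.map_append, List.map_singleton, List.getLast_map, heq]
  have hle := hmax _ (hI.append_singleton hne hj hjw).subseqAt_sublist
    (hext ▸ hrc.append_getLast hsne)
  simp [subseqAt, hlen] at hle

/-- the last position of a maximum-length plateau-k-rollercoaster
subsequence is the last occurrence of its letter in `w`. -/
theorem stmt1 (w : Word) (k m : ℕ) (hk : 3 ≤ k)
    (hmax : ∀ s : Word, s.Sublist w → IsPlateauRC k s → s.length ≤ m)
    (I : List ℕ) (hne : I ≠ []) (hI : embeds w I) (hlen : I.length = m)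
    (hrc : IsPlateauRC k (subseqAt w I)) :
    ∀ j, I.getLast hne < j → j < w.length →
      w.getD j 0 ≠ w.getD (I.getLast hne) 0 :=
  stmt1_general w k m hmax I hne hI hlen hrc
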